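/- Let Λ be a lattice of full rank in ℝ^d of covolume 1. Then ψ̲_1(Λ) = −ω(Λ)/(1 + ω(Λ)), with the convention that the right-hand side equals −1 when ω(Λ) = +∞ and equals 0 when ω(Λ) = 0 (equivalently, ω(Λ)^{−1} + ψ̲_1(Λ)^{−1} + 1 = 0 when 0 < ω(Λ) < ∞). -/

import Mathlib

open scoped BigOperators

noncomputable section

/-- The multiplicative function `Π(x) = ∏ i |x_i|^{1/d}`. -/
def Pibar (d : ℕ) (x : Fin d → ℝ) : ℝ := ∏ i, |x i| ^ (1 / (d : ℝ))

/-- The Diophantine exponent of a lattice `Λ ⊆ ℝ^d` (sup-norm `‖·‖`). -/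
def dioExp (d : ℕ) (Λ : Set (Fin d → ℝ)) : EReal :=
  sSup {g : EReal | ∃ γ : ℝ, g = (γ : EReal) ∧
    {x : Fin d → ℝ | x ∈ Λ ∧ Pibar d x ≤ ‖x‖ ^ (-γ)}.Infinite}

/-- `Λ` is a lattice of full rank in `ℝ^d` of covolume `1`. -/
def IsUnimodularLattice (d : ℕ) (Λ : Set (Fin d → ℝ)) : Prop :=
  ∃ A : Matrix (Fin d) (Fin d) ℝ, |A.det| = 1 ∧
    Λ = {x | ∃ z : Fin d → ℤ, x = A.mulVec fun i => (z i : ℝ)}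

/-- `λ₁(B_τ)`: the first successive minimum with respect to `Λ` of the box
`B_τ = {x : |x_i| ≤ e^{τ_i}}`. -/
def firstMin (d : ℕ) (Λ : Set (Fin d → ℝ)) (τ : Fin d → ℝ) : ℝ :=
  sInf {l : ℝ | 0 < l ∧ ∃ x ∈ Λ, x ≠ 0 ∧ ∀ i, |x i| ≤ l * Real.exp (τ i)}

/-- `|τ|₊ = max {τ_i : τ_i ≥ 0}`. -/
def tauPlus (d : ℕ) (τ : Fin d → ℝ) : ℝ :=
  sSup {t : ℝ | 0 ≤ t ∧ ∃ i, τ i = t}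

/-- The first Schmidt–Summerer lower exponent
`ψ̲₁(Λ) = liminf_{|τ|→∞} L₁(τ)/|τ|₊`, the liminf being over `τ` in the hyperplane
`τ₁ + ⋯ + τ_d = 0`, where `L₁(τ) = log λ₁(B_τ)`. -/
def psi1 (d : ℕ) (Λ : Set (Fin d → ℝ)) : ℝ :=
  Filter.liminf
    (fun τ : {τ : Fin d → ℝ // ∑ i, τ i = 0} =>
      Real.log (firstMin d Λ τ.1) / tauPlus d τ.1)
    (Filter.comap (fun τ : {τ : Fin d → ℝ // ∑ i, τ i = 0} => ‖τ.1‖) Filter.atTop)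


/-!
Write `T = |τ|₊`. By Minkowski, every box `B_τ` with `∑ τ = 0` contains a nonzero lattice point
up to a factor `1 + ε`, so `λ₁(B_τ) ≤ 1`, and `λ₁(B_τ) ≥ c e^{-T}` because lattice points have
norm at least `c`; hence `-1 ≤ ψ̲₁ ≤ 0`.

Upper bound: a lattice point `x` with `Π(x) ≤ ‖x‖^{-γ}` lies in the box `‖x‖^{-γ} B_τ` for a `τ`
with `T = (1 + γ) log ‖x‖`, so infinitely many such points give `ψ̲₁ ≤ -γ/(1+γ)`.
Lower bound: if only finitely many lattice points satisfy `Π(x) ≤ ‖x‖^{-γ}`, every other nonzero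
`x ∈ l B_τ` has `(l e^T)^{-γ} ≤ ‖x‖^{-γ} < Π(x) ≤ l`, so `λ₁(B_τ) ≳ e^{-γ T/(1+γ)}` and
`ψ̲₁ ≥ -γ/(1+γ)`. Letting `γ` tend to `ω(Λ)` from both sides gives the formula, `ω(Λ) ≥ 0` coming
from infinitely many lattice points with `Π(x) ≤ 2`.
-/

open Filter Real Set MeasureTheory Submodule Topology

theorem Set.Finite.exists_pos_forall_le {α : Type*} {s : Set α} (hs : s.Finite) {f : α → ℝ}
    (hf : ∀ x ∈ s, 0 < f x) : ∃ c > 0, ∀ x ∈ s, c ≤ f x := by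
  have h : ∀ᶠ c in 𝓝[>] (0 : ℝ), ∀ x ∈ s, c ≤ f x :=
    hs.eventually_all.2 fun x hx => nhdsWithin_le_nhds (eventually_le_nhds (hf x hx))
  exact (h.and self_mem_nhdsWithin).exists.imp fun c hc => ⟨hc.2, hc.1⟩

namespace IsUnimodularLattice

variable {d : ℕ} {Λ : Set (Fin d → ℝ)}

theorem exists_basis (hΛ : IsUnimodularLattice d Λ) :
    ∃ b : Module.Basis (Fin d) ℝ (Fin d → ℝ),
      Λ = span ℤ (range b) ∧ volume (ZSpan.fundamentalDomain b) = 1 := by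
  obtain ⟨A, hdet, rfl⟩ := hΛ
  have : Invertible A := A.invertibleOfIsUnitDet (isUnit_iff_ne_zero.2 fun h => by simp [h] at hdet)
  set b := (Pi.basisFun ℝ (Fin d)).map (A.toLinearEquiv' this)
  have hb : ∀ i j, b i j = A j i := fun i j => by
    simp only [b, Module.Basis.map_apply, Pi.basisFun_apply]
    change (A.mulVec (Pi.single i 1)) j = A j i
    simp
  have hsum : ∀ c : Fin d → ℤ, ∑ i, c i • b i = A.mulVec fun i => (c i : ℝ) := fun c => by
    ext j
    simp [Matrix.mulVec, dotProduct, hb, mul_comm]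
  refine ⟨b, ?_, ?_⟩
  · ext x
    simp only [mem_ofPred_eq, SetLike.mem_coe, mem_span_range_iff_exists_fun, hsum, eq_comm]
  · have hb' : Matrix.of b = A.transpose := Matrix.ext hb
    rw [ZSpan.volume_fundamentalDomain, hb', Matrix.det_transpose, hdet, ENNReal.ofReal_one]

variable (hΛ : IsUnimodularLattice d Λ)
include hΛ

theorem finite_setOf_norm_le (R : ℝ) : {x | x ∈ Λ ∧ ‖x‖ ≤ R}.Finite := by
  obtain ⟨b, rfl, -⟩ := hΛ.exists_basis
  convert ZSpan.setFinite_inter b (Metric.isBounded_closedBall (x := 0) (r := R)) using 1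
  ext x
  simp [and_comm]

theorem zsmul_mem {x : Fin d → ℝ} (hx : x ∈ Λ) (k : ℤ) : k • x ∈ Λ := by
  obtain ⟨b, rfl, -⟩ := hΛ.exists_basis
  exact Submodule.smul_mem _ k hx

theorem exists_pos_le_norm : ∃ c > 0, ∀ x ∈ Λ, x ≠ 0 → c ≤ ‖x‖ := by
  obtain ⟨c, hc, hle⟩ := ((hΛ.finite_setOf_norm_le 1).sdiff (t := {0})).exists_pos_forall_le
    (f := (‖·‖)) fun x hx => norm_pos_iff.2 hx.2
  refine ⟨min c 1, lt_min hc one_pos, fun x hx hx0 => ?_⟩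
  rcases le_or_gt ‖x‖ 1 with h | h
  · exact (min_le_left _ _).trans (hle x ⟨⟨hx, h⟩, hx0⟩)
  · exact (min_le_right _ _).trans h.le

/-- Minkowski's convex body theorem: the box `r B_τ` has volume `(2r)^d > 2^d`. -/
theorem exists_ne_zero_mem_box (hd : 0 < d) {τ : Fin d → ℝ} (hτ : ∑ i, τ i = 0) {r : ℝ}
    (hr : 1 < r) : ∃ x ∈ Λ, x ≠ 0 ∧ ∀ i, |x i| ≤ r * exp (τ i) := by
  obtain ⟨b, rfl, hvol⟩ := hΛ.exists_basis
  set v : Fin d → ℝ := fun i => r * exp (τ i)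
  have hv : ∀ i, 0 < v i := fun i => mul_pos (by linarith) (exp_pos _)
  have hvols : volume (Icc (-v) v) = ENNReal.ofReal ((2 * r) ^ d) := by
    rw [Real.volume_Icc_pi, ← ENNReal.ofReal_prod_of_nonneg fun i _ => by
      simp only [Pi.neg_apply]; linarith [hv i]]
    simp [v, ← two_mul, ← mul_assoc, Finset.prod_mul_distrib, ← Real.exp_sum, hτ]
  have hlt : volume (ZSpan.fundamentalDomain b) * 2 ^ Module.finrank ℝ (Fin d → ℝ)
      < volume (Icc (-v) v) := by
    rw [hvol, hvols, one_mul, Module.finrank_fin_fun, ← ENNReal.ofReal_ofNat,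
      ← ENNReal.ofReal_pow zero_le_two, ENNReal.ofReal_lt_ofReal_iff (by positivity)]
    exact pow_lt_pow_left₀ (by linarith) zero_le_two hd.ne'
  have : Countable (span ℤ (range b)).toAddSubgroup :=
    inferInstanceAs (Countable (span ℤ (range b)))
  obtain ⟨x, hx0, hxv⟩ := exists_ne_zero_mem_lattice_of_measure_mul_two_pow_lt_measure
    (ZSpan.isAddFundamentalDomain' b volume)
    (fun x (hx : x ∈ Icc (-v) v) => ⟨neg_le_neg hx.2, neg_le.1 hx.1⟩) (convex_Icc _ _) hlt
  exact ⟨x, x.2, by simpa using hx0, fun i => abs_le.2 ⟨hxv.1 i, hxv.2 i⟩⟩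

end IsUnimodularLattice

section Pibar

variable {d : ℕ} {x : Fin d → ℝ}

theorem pibar_eq_zero (hd : 0 < d) {i : Fin d} (hxi : x i = 0) : Pibar d x = 0 :=
  Finset.prod_eq_zero (Finset.mem_univ i) (by simp [hxi, hd.ne'])

theorem pibar_pos (hx : ∀ i, x i ≠ 0) : 0 < Pibar d x :=
  Finset.prod_pos fun i _ => rpow_pos_of_pos (abs_pos.2 (hx i)) _

theorem log_pibar (hx : ∀ i, x i ≠ 0) : log (Pibar d x) = (∑ i, log |x i|) / d := by
  rw [Pibar, log_prod fun i _ => (rpow_pos_of_pos (abs_pos.2 (hx i)) _).ne', Finset.sum_div]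
  simp_rw [log_rpow (abs_pos.2 (hx _)), one_div, inv_mul_eq_div]

theorem pibar_le_of_forall_abs_le (hd : 0 < d) {τ : Fin d → ℝ} (hτ : ∑ i, τ i = 0) {l : ℝ}
    (hl : 0 ≤ l) (hx : ∀ i, |x i| ≤ l * exp (τ i)) : Pibar d x ≤ l :=
  calc Pibar d x ≤ ∏ i, (l * exp (τ i)) ^ (1 / (d : ℝ)) :=
        Finset.prod_le_prod (fun i _ => by positivity)
          fun i _ => rpow_le_rpow (abs_nonneg _) (hx i) (by positivity)
    _ = (l ^ d) ^ (d : ℝ)⁻¹ := by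
        rw [finsetProd_rpow _ _ fun i _ => by positivity, Finset.prod_mul_distrib,
          ← exp_sum, hτ, exp_zero, mul_one, Finset.prod_const, Finset.card_univ,
          Fintype.card_fin, one_div]
    _ = l := pow_rpow_inv_natCast hl hd.ne'

end Pibar

section TauPlus

variable {d : ℕ} {τ : Fin d → ℝ}

theorem exists_nonneg_of_sum_eq_zero (hd : 0 < d) (hτ : ∑ i, τ i = 0) : ∃ i, 0 ≤ τ i := by
  have : Nonempty (Fin d) := ⟨⟨0, hd⟩⟩
  obtain ⟨i, -, hi⟩ := Finset.exists_le_of_sum_le (f := 0) (g := τ) Finset.univ_nonempty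
    (by simp [hτ])
  exact ⟨i, hi⟩

theorem bddAbove_tauPlusSet : BddAbove {t : ℝ | 0 ≤ t ∧ ∃ i, τ i = t} :=
  (finite_range τ).bddAbove.mono fun _ ht => ht.2

theorem tauPlus_nonneg (hd : 0 < d) (hτ : ∑ i, τ i = 0) : 0 ≤ tauPlus d τ := by
  obtain ⟨i, hi⟩ := exists_nonneg_of_sum_eq_zero hd hτ
  exact hi.trans (le_csSup bddAbove_tauPlusSet ⟨hi, i, rfl⟩)

theorem le_tauPlus (hd : 0 < d) (hτ : ∑ i, τ i = 0) (i : Fin d) : τ i ≤ tauPlus d τ := by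
  rcases le_or_gt 0 (τ i) with h | h
  · exact le_csSup bddAbove_tauPlusSet ⟨h, i, rfl⟩
  · exact h.le.trans (tauPlus_nonneg hd hτ)

theorem tauPlus_le (hd : 0 < d) (hτ : ∑ i, τ i = 0) {M : ℝ} (hM : ∀ i, τ i ≤ M) :
    tauPlus d τ ≤ M := by
  obtain ⟨i, hi⟩ := exists_nonneg_of_sum_eq_zero hd hτ
  refine csSup_le ⟨τ i, hi, i, rfl⟩ ?_
  rintro _ ⟨-, j, rfl⟩
  exact hM j

theorem tauPlus_le_norm (hd : 0 < d) (hτ : ∑ i, τ i = 0) : tauPlus d τ ≤ ‖τ‖ :=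
  tauPlus_le hd hτ fun i => (le_abs_self _).trans (norm_le_pi_norm τ i)

/-- Since the `τ i` sum to zero, `-τ i = ∑ j ≠ i, τ j ≤ (d - 1) |τ|₊`. -/
theorem norm_le_mul_tauPlus (hd : 0 < d) (hτ : ∑ i, τ i = 0) : ‖τ‖ ≤ d * tauPlus d τ := by
  have hT := tauPlus_nonneg hd hτ
  refine pi_norm_le_iff_of_nonneg (by positivity) |>.2 fun i => abs_le.2 ⟨?_, ?_⟩
  · have := Finset.single_le_sum (f := fun j => tauPlus d τ - τ j)
      (fun j _ => sub_nonneg.2 (le_tauPlus hd hτ j)) (Finset.mem_univ i)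
    simp only [Finset.sum_sub_distrib, hτ, Finset.sum_const, Finset.card_univ, Fintype.card_fin,
      nsmul_eq_mul, sub_zero] at this
    linarith
  · exact (le_tauPlus hd hτ i).trans (le_mul_of_one_le_left hT (by exact_mod_cast hd))

theorem norm_le_mul_exp_tauPlus (hd : 0 < d) (hτ : ∑ i, τ i = 0) {l : ℝ} (hl : 0 ≤ l)
    {x : Fin d → ℝ} (hxl : ∀ i, |x i| ≤ l * exp (τ i)) : ‖x‖ ≤ l * exp (tauPlus d τ) :=
  pi_norm_le_iff_of_nonneg (by positivity) |>.2 fun i =>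
    (hxl i).trans (by gcongr; exact le_tauPlus hd hτ i)

end TauPlus

section FirstMin

variable {d : ℕ} {Λ : Set (Fin d → ℝ)} {τ : Fin d → ℝ}

theorem firstMin_le {l : ℝ} (hl : 0 < l) {x : Fin d → ℝ} (hx : x ∈ Λ) (hx0 : x ≠ 0)
    (hxl : ∀ i, |x i| ≤ l * exp (τ i)) : firstMin d Λ τ ≤ l :=
  csInf_le ⟨0, fun _ h => h.1.le⟩ ⟨hl, x, hx, hx0, hxl⟩

namespace IsUnimodularLattice

variable (hΛ : IsUnimodularLattice d Λ) (hd : 0 < d)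
include hΛ hd

theorem le_firstMin (hτ : ∑ i, τ i = 0) {m : ℝ}
    (h : ∀ l > 0, ∀ x ∈ Λ, x ≠ 0 → (∀ i, |x i| ≤ l * exp (τ i)) → m ≤ l) :
    m ≤ firstMin d Λ τ := by
  obtain ⟨x, hx, hx0, hxl⟩ := hΛ.exists_ne_zero_mem_box hd hτ one_lt_two
  exact le_csInf ⟨2, two_pos, x, hx, hx0, hxl⟩ fun l ⟨hl, x, hx, hx0, hxl⟩ => h l hl x hx hx0 hxl

theorem firstMin_le_one (hτ : ∑ i, τ i = 0) : firstMin d Λ τ ≤ 1 := by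
  refine le_of_forall_pos_lt_add fun ε hε => ?_
  obtain ⟨x, hx, hx0, hxl⟩ := hΛ.exists_ne_zero_mem_box hd hτ (lt_add_of_pos_right 1 (half_pos hε))
  exact (firstMin_le (by linarith) hx hx0 hxl).trans_lt (by linarith)

theorem exists_mul_exp_neg_tauPlus_le_firstMin :
    ∃ c > 0, ∀ τ : Fin d → ℝ, ∑ i, τ i = 0 → c * exp (-tauPlus d τ) ≤ firstMin d Λ τ := by
  obtain ⟨c, hc, hcx⟩ := hΛ.exists_pos_le_norm
  refine ⟨c, hc, fun τ hτ => hΛ.le_firstMin hd hτ fun l hl x hx hx0 hxl => ?_⟩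
  calc c * exp (-tauPlus d τ) ≤ l * exp (tauPlus d τ) * exp (-tauPlus d τ) := by
        gcongr; exact (hcx x hx hx0).trans (norm_le_mul_exp_tauPlus hd hτ hl.le hxl)
    _ = l := by rw [mul_assoc, ← exp_add, add_neg_cancel, exp_zero, mul_one]

theorem firstMin_pos (hτ : ∑ i, τ i = 0) : 0 < firstMin d Λ τ := by
  obtain ⟨c, hc, h⟩ := hΛ.exists_mul_exp_neg_tauPlus_le_firstMin hd
  exact (by positivity : 0 < c * exp (-tauPlus d τ)).trans_le (h τ hτ)

end IsUnimodularLattice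

end FirstMin

section Liminf

variable {d : ℕ} {Λ : Set (Fin d → ℝ)}

abbrev ZeroSum (d : ℕ) := {τ : Fin d → ℝ // ∑ i, τ i = 0}

def zeroSumAtTop (d : ℕ) : Filter (ZeroSum d) := comap (fun τ => ‖τ.1‖) atTop

def normalizedL1 (d : ℕ) (Λ : Set (Fin d → ℝ)) (τ : ZeroSum d) : ℝ :=
  log (firstMin d Λ τ.1) / tauPlus d τ.1

theorem psi1_eq_liminf : psi1 d Λ = liminf (normalizedL1 d Λ) (zeroSumAtTop d) := rfl

theorem zeroSumAtTop_neBot (hd : 2 ≤ d) : (zeroSumAtTop d).NeBot := by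
  refine comap_neBot fun t ht => ?_
  obtain ⟨a, ha⟩ := mem_atTop_sets.1 ht
  let i₀ : Fin d := ⟨0, by omega⟩
  let i₁ : Fin d := ⟨1, by omega⟩
  set τ : Fin d → ℝ := Pi.single i₀ |a| - Pi.single i₁ |a|
  refine ⟨⟨τ, by simp [τ, Finset.sum_sub_distrib]⟩, ha _ ((le_abs_self a).trans ?_)⟩
  simpa [τ, i₀, i₁] using norm_le_pi_norm τ i₀

theorem tendsto_tauPlus_zeroSumAtTop (hd : 0 < d) :
    Tendsto (fun τ : ZeroSum d => tauPlus d τ.1) (zeroSumAtTop d) atTop := by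
  have hd' : (0 : ℝ) < d := by exact_mod_cast hd
  refine tendsto_atTop_mono (fun τ => ?_) (tendsto_comap.atTop_div_const hd')
  rw [div_le_iff₀ hd', mul_comm]
  exact norm_le_mul_tauPlus hd τ.2

theorem frequently_zeroSumAtTop (hd : 0 < d) {p : ZeroSum d → Prop}
    (h : ∀ t, ∃ τ : ZeroSum d, t ≤ tauPlus d τ.1 ∧ p τ) : ∃ᶠ τ in zeroSumAtTop d, p τ := by
  rw [zeroSumAtTop, frequently_comap, frequently_atTop]
  intro t
  obtain ⟨τ, ht, hp⟩ := h t
  exact ⟨‖τ.1‖, ht.trans (tauPlus_le_norm hd τ.2), τ, rfl, hp⟩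

theorem tendsto_div_tauPlus_sub (hd : 0 < d) (C κ : ℝ) :
    Tendsto (fun τ : ZeroSum d => C / tauPlus d τ.1 - κ) (zeroSumAtTop d) (𝓝 (-κ)) := by
  simpa using (tendsto_const_nhds.div_atTop (tendsto_tauPlus_zeroSumAtTop hd)).sub_const κ

theorem eventually_log_div_tauPlus_sub_le (hd : 0 < d) {c κ : ℝ} (hc : 0 < c)
    (h : ∀ τ : Fin d → ℝ, ∑ i, τ i = 0 → c * exp (-(κ * tauPlus d τ)) ≤ firstMin d Λ τ) :
    ∀ᶠ τ in zeroSumAtTop d, log c / tauPlus d τ.1 - κ ≤ normalizedL1 d Λ τ := by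
  filter_upwards [(tendsto_tauPlus_zeroSumAtTop hd).eventually_gt_atTop 0] with τ hT
  have hlog := log_le_log (by positivity) (h τ.1 τ.2)
  rw [log_mul hc.ne' (exp_pos _).ne', log_exp] at hlog
  rw [normalizedL1, sub_le_iff_le_add, div_add' _ _ _ hT.ne', div_le_div_iff_of_pos_right hT]
  linarith

namespace IsUnimodularLattice

variable (hΛ : IsUnimodularLattice d Λ)
include hΛ

theorem normalizedL1_nonpos (hd : 0 < d) (τ : ZeroSum d) : normalizedL1 d Λ τ ≤ 0 :=
  div_nonpos_of_nonpos_of_nonneg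
    (log_nonpos (hΛ.firstMin_pos hd τ.2).le (hΛ.firstMin_le_one hd τ.2)) (tauPlus_nonneg hd τ.2)

theorem isBoundedUnder_ge_normalizedL1 (hd : 0 < d) :
    (zeroSumAtTop d).IsBoundedUnder (· ≥ ·) (normalizedL1 d Λ) := by
  obtain ⟨c, hc, h⟩ := hΛ.exists_mul_exp_neg_tauPlus_le_firstMin hd
  exact (tendsto_div_tauPlus_sub hd (log c) 1).isBoundedUnder_ge.mono_ge
    (eventually_log_div_tauPlus_sub_le hd hc (by simpa using h))

theorem le_psi1_of_forall_le_firstMin (hd : 2 ≤ d) {c κ : ℝ} (hc : 0 < c)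
    (h : ∀ τ : Fin d → ℝ, ∑ i, τ i = 0 → c * exp (-(κ * tauPlus d τ)) ≤ firstMin d Λ τ) :
    -κ ≤ psi1 d Λ := by
  have := zeroSumAtTop_neBot hd
  have hd0 : 0 < d := by omega
  rw [psi1_eq_liminf, ← (tendsto_div_tauPlus_sub hd0 (log c) κ).liminf_eq]
  exact liminf_le_liminf (eventually_log_div_tauPlus_sub_le hd0 hc h)
    (tendsto_div_tauPlus_sub hd0 (log c) κ).isBoundedUnder_ge
    (isCoboundedUnder_ge_of_le _ (hΛ.normalizedL1_nonpos hd0))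

theorem neg_one_le_psi1 (hd : 2 ≤ d) : -1 ≤ psi1 d Λ := by
  obtain ⟨c, hc, h⟩ := hΛ.exists_mul_exp_neg_tauPlus_le_firstMin (by omega)
  exact hΛ.le_psi1_of_forall_le_firstMin hd hc (by simpa using h)

theorem psi1_le_of_frequently (hd : 0 < d) {a : ℝ}
    (h : ∀ t, ∃ τ : Fin d → ℝ, ∑ i, τ i = 0 ∧ t ≤ tauPlus d τ ∧
      log (firstMin d Λ τ) / tauPlus d τ ≤ a) :
    psi1 d Λ ≤ a := by
  refine liminf_le_of_frequently_le (frequently_zeroSumAtTop hd fun t => ?_)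
    (hΛ.isBoundedUnder_ge_normalizedL1 hd)
  obtain ⟨τ, hτ, ht, hle⟩ := h t
  exact ⟨⟨τ, hτ⟩, ht, hle⟩

end IsUnimodularLattice

end Liminf

def approxSet (d : ℕ) (Λ : Set (Fin d → ℝ)) (γ : ℝ) : Set (Fin d → ℝ) :=
  {x | x ∈ Λ ∧ Pibar d x ≤ ‖x‖ ^ (-γ)}

theorem le_dioExp_of_approxSet_infinite {d : ℕ} {Λ : Set (Fin d → ℝ)} {γ : ℝ}
    (h : (approxSet d Λ γ).Infinite) : (γ : EReal) ≤ dioExp d Λ :=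
  le_sSup ⟨γ, rfl, h⟩

namespace IsUnimodularLattice

variable {d : ℕ} {Λ : Set (Fin d → ℝ)} (hΛ : IsUnimodularLattice d Λ)
include hΛ

theorem approxSet_infinite_of_le {γ γ' : ℝ} (hγ : γ ≤ γ') (h : (approxSet d Λ γ').Infinite) :
    (approxSet d Λ γ).Infinite := by
  refine (h.sdiff (hΛ.finite_setOf_norm_le 1)).mono ?_
  rintro x ⟨⟨hx, hxγ⟩, hx1⟩
  refine ⟨hx, ?_⟩
  have hx1 : 1 ≤ ‖x‖ := le_of_lt (not_le.1 fun h => hx1 ⟨hx, h⟩)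
  exact hxγ.trans (rpow_le_rpow_of_exponent_le hx1 (neg_le_neg hγ))

theorem approxSet_infinite_of_lt_dioExp {γ : ℝ} (h : (γ : EReal) < dioExp d Λ) :
    (approxSet d Λ γ).Infinite := by
  obtain ⟨_, ⟨γ', rfl, hγ'⟩, hlt⟩ := lt_sSup_iff.1 h
  exact hΛ.approxSet_infinite_of_le (EReal.coe_lt_coe_iff.1 hlt).le hγ'

theorem infinite_setOf_pibar_eq_zero (hd : 0 < d) {x : Fin d → ℝ} (hx : x ∈ Λ) (hx0 : x ≠ 0)
    {i : Fin d} (hxi : x i = 0) : {y | y ∈ Λ ∧ y ≠ 0 ∧ Pibar d y = 0}.Infinite :=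
  infinite_of_injective_forall_mem (f := fun n : ℕ => ((n : ℤ) + 1) • x)
    ((smul_left_injective ℤ hx0).comp fun a b h => by simpa using h)
    fun n => ⟨hΛ.zsmul_mem hx _, smul_ne_zero (by omega) hx0,
      pibar_eq_zero hd (i := i) (by simp [hxi])⟩

/-- Minkowski in the boxes with `τ = s e₀ - s e₁` gives nonzero points with `Π ≤ 2` and arbitrarily
small second coordinate; a finite set of them would have to contain a point with a zero
coordinate, whose multiples all have `Π = 0`. -/
theorem infinite_setOf_pibar_le_two (hd : 2 ≤ d) :
    {x | x ∈ Λ ∧ x ≠ 0 ∧ Pibar d x ≤ 2}.Infinite := by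
  by_cases hzero : ∃ x ∈ Λ, x ≠ 0 ∧ ∃ i, x i = 0
  · obtain ⟨x, hx, hx0, i, hxi⟩ := hzero
    refine (hΛ.infinite_setOf_pibar_eq_zero (by omega) hx hx0 hxi).mono ?_
    rintro y ⟨hy, hy0, hyP⟩
    exact ⟨hy, hy0, hyP.trans_le zero_le_two⟩
  push Not at hzero
  intro hfin
  let i₀ : Fin d := ⟨0, by omega⟩
  let i₁ : Fin d := ⟨1, by omega⟩
  obtain ⟨m, hm, hmx⟩ := hfin.exists_pos_forall_le (f := fun x => |x i₁|)
    fun x hx => abs_pos.2 (hzero x hx.1 hx.2.1 i₁)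
  set s := -log (m / 4)
  set τ : Fin d → ℝ := Pi.single i₀ s - Pi.single i₁ s
  have hτ : ∑ i, τ i = 0 := by simp [τ, Finset.sum_sub_distrib]
  obtain ⟨x, hx, hx0, hxb⟩ := hΛ.exists_ne_zero_mem_box (by omega) hτ one_lt_two
  have hx₁ : |x i₁| ≤ m / 2 := by
    have hτ₁ : τ i₁ = log (m / 4) := by simp [τ, s, i₀, i₁]
    have := hxb i₁
    rw [hτ₁, exp_log (by positivity)] at this
    linarith
  have := hmx x ⟨hx, hx0, pibar_le_of_forall_abs_le (by omega) hτ zero_le_two hxb⟩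
  linarith

theorem approxSet_infinite_of_neg (hd : 2 ≤ d) {γ : ℝ} (hγ : γ < 0) :
    (approxSet d Λ γ).Infinite := by
  set R := (2 : ℝ) ^ (-γ)⁻¹
  refine ((hΛ.infinite_setOf_pibar_le_two hd).sdiff (hΛ.finite_setOf_norm_le R)).mono ?_
  rintro x ⟨⟨hx, -, hxP⟩, hxR⟩
  refine ⟨hx, hxP.trans ?_⟩
  have hxR : R ≤ ‖x‖ := le_of_lt (not_le.1 fun h => hxR ⟨hx, h⟩)
  calc (2 : ℝ) = R ^ (-γ) := (rpow_inv_rpow zero_le_two (by linarith)).symm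
    _ ≤ ‖x‖ ^ (-γ) := rpow_le_rpow (by positivity) hxR (by linarith)

theorem zero_le_dioExp (hd : 2 ≤ d) : 0 ≤ dioExp d Λ := by
  refine le_of_forall_lt_imp_le_of_dense fun c hc => ?_
  induction c using EReal.rec with
  | bot => exact bot_le
  | coe γ =>
    exact le_dioExp_of_approxSet_infinite (hΛ.approxSet_infinite_of_neg hd (EReal.coe_neg'.1 hc))
  | top => exact absurd hc (not_lt.2 le_top)

end IsUnimodularLattice

theorem exists_sum_eq_zero_of_le {ι : Type*} [Fintype ι] {β : ι → ℝ} {T : ℝ} (hT : 0 ≤ T)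
    (hβ : ∀ i, β i ≤ T) (hsum : ∑ i, β i ≤ 0) :
    ∃ τ : ι → ℝ, ∑ i, τ i = 0 ∧ (∀ i, β i ≤ τ i ∧ τ i ≤ T) ∧ ∀ i, β i = T → τ i = T := by
  set D := Fintype.card ι * T - ∑ i, β i
  have hD : -∑ i, β i ≤ D := by
    have : 0 ≤ Fintype.card ι * T := by positivity
    linarith
  set s := -(∑ i, β i) / D
  have hs0 : 0 ≤ s := div_nonneg (by linarith) (by linarith)
  have hs1 : s ≤ 1 := div_le_one_of_le₀ hD (by linarith)
  have hsD : s * D = -∑ i, β i := by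
    rcases (show 0 ≤ D by linarith).eq_or_lt with h | h
    · rw [← h, mul_zero]; linarith
    · exact div_mul_cancel₀ _ h.ne'
  refine ⟨fun i => β i + s * (T - β i), ?_, fun i => ⟨?_, ?_⟩, fun i hi => by simp [hi]⟩
  · rw [Finset.sum_add_distrib, ← Finset.mul_sum, Finset.sum_sub_distrib, Finset.sum_const,
      Finset.card_univ, nsmul_eq_mul, hsD, add_neg_cancel]
  · nlinarith [hβ i]
  · nlinarith [hβ i]

theorem exists_tauPlus_eq_of_le {d : ℕ} (hd : 0 < d) {β : Fin d → ℝ} {T : ℝ} (hT : 0 ≤ T)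
    (hβ : ∀ i, β i ≤ T) (hsum : ∑ i, β i ≤ 0) {j : Fin d} (hj : β j = T) :
    ∃ τ : Fin d → ℝ, ∑ i, τ i = 0 ∧ tauPlus d τ = T ∧ ∀ i, β i ≤ τ i := by
  obtain ⟨τ, hτ, hβτ, hτT⟩ := exists_sum_eq_zero_of_le hT hβ hsum
  exact ⟨τ, hτ, le_antisymm (tauPlus_le hd hτ fun i => (hβτ i).2) (hτT j hj ▸ le_tauPlus hd hτ j),
    fun i => (hβτ i).1⟩

theorem exists_abs_eq_norm {d : ℕ} (hd : 0 < d) (x : Fin d → ℝ) : ∃ j, |x j| = ‖x‖ := by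
  have : Nonempty (Fin d) := ⟨⟨0, hd⟩⟩
  obtain ⟨j, -, hj⟩ := Finset.exists_mem_eq_sup Finset.univ Finset.univ_nonempty (‖x ·‖₊)
  exact ⟨j, by rw [← Real.norm_eq_abs, ← coe_nnnorm, ← coe_nnnorm, Pi.nnnorm_def, hj]⟩

/-- On zero coordinates the box condition is vacuous; `-d T` there just makes the sum small. -/
theorem sum_ite_log_abs_add_le_zero {d : ℕ} (hd : 0 < d) {x : Fin d → ℝ} {γ T : ℝ}
    (hx0 : 0 < ‖x‖) (hxγ : Pibar d x ≤ ‖x‖ ^ (-γ))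
    (hT : ∀ i, (if x i = 0 then -(d * T) else log |x i| + γ * log ‖x‖) ≤ T) :
    ∑ i, (if x i = 0 then -(d * T) else log |x i| + γ * log ‖x‖) ≤ 0 := by
  by_cases hall : ∀ i, x i ≠ 0
  · have hlog := log_le_log (pibar_pos hall) hxγ
    rw [log_pibar hall, log_rpow hx0, div_le_iff₀ (by exact_mod_cast hd)] at hlog
    simp only [hall, if_false, Finset.sum_add_distrib, Finset.sum_const, Finset.card_univ,
      Fintype.card_fin, nsmul_eq_mul]
    linarith
  · push Not at hall
    obtain ⟨i, hi⟩ := hall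
    have hT0 : 0 ≤ T := by
      have := hT i
      simp only [hi, if_true] at this
      nlinarith [(Nat.cast_nonneg d : (0 : ℝ) ≤ d)]
    have := Finset.single_le_sum (f := fun j => T - if x j = 0 then -(d * T) else
      log |x j| + γ * log ‖x‖) (fun j _ => sub_nonneg.2 (hT j)) (Finset.mem_univ i)
    simp only [Finset.sum_sub_distrib, Finset.sum_const, Finset.card_univ, Fintype.card_fin,
      nsmul_eq_mul, hi, if_true] at this
    linarith

/-- Fit the box `‖x‖^{-γ} B_τ` around `x` by taking `τ i ≥ log |x i| + γ log ‖x‖`, with equality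
at a coordinate where `|x j| = ‖x‖`. -/
theorem exists_tauPlus_eq_forall_abs_le {d : ℕ} (hd : 0 < d) {γ : ℝ} (hγ : -1 ≤ γ)
    {x : Fin d → ℝ} (hx1 : 1 ≤ ‖x‖) (hxγ : Pibar d x ≤ ‖x‖ ^ (-γ)) :
    ∃ τ : Fin d → ℝ, ∑ i, τ i = 0 ∧ tauPlus d τ = (1 + γ) * log ‖x‖ ∧
      ∀ i, |x i| ≤ ‖x‖ ^ (-γ) * exp (τ i) := by
  set T := (1 + γ) * log ‖x‖
  have hx0 : 0 < ‖x‖ := one_pos.trans_le hx1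
  have hT : 0 ≤ T := mul_nonneg (by linarith) (log_nonneg hx1)
  set β : Fin d → ℝ := fun i => if x i = 0 then -(d * T) else log |x i| + γ * log ‖x‖
  have hβ : ∀ i, β i ≤ T := fun i => by
    by_cases hxi : x i = 0
    · simp only [β, hxi, if_true]
      nlinarith
    · simp only [β, hxi, if_false]
      linarith [log_le_log (abs_pos.2 hxi) (norm_le_pi_norm x i)]
  obtain ⟨j, hj⟩ := exists_abs_eq_norm hd x
  have hβj : β j = T := by
    have hxj : x j ≠ 0 := fun h => by simp [h] at hj; linarith
    simp only [β, hxj, if_false, hj, T]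
    ring
  obtain ⟨τ, hτ, hτT, hβτ⟩ :=
    exists_tauPlus_eq_of_le hd hT hβ (sum_ite_log_abs_add_le_zero hd hx0 hxγ hβ) hβj
  refine ⟨τ, hτ, hτT, fun i => ?_⟩
  by_cases hxi : x i = 0
  · rw [hxi, abs_zero]
    positivity
  · have hτi := hβτ i
    simp only [β, hxi, if_false] at hτi
    rw [rpow_def_of_pos hx0, ← exp_add, ← exp_log (abs_pos.2 hxi)]
    exact exp_le_exp.2 (by linarith)

theorem IsUnimodularLattice.psi1_le_of_approxSet_infinite {d : ℕ} {Λ : Set (Fin d → ℝ)}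
    (hΛ : IsUnimodularLattice d Λ) (hd : 0 < d) {γ : ℝ} (hγ : -1 < γ)
    (h : (approxSet d Λ γ).Infinite) : psi1 d Λ ≤ -γ / (1 + γ) := by
  have hγ' : 0 < 1 + γ := by linarith
  refine hΛ.psi1_le_of_frequently hd fun t => ?_
  set R := exp (max t 0 / (1 + γ))
  obtain ⟨x, ⟨hx, hxγ⟩, hxR⟩ := (h.sdiff (hΛ.finite_setOf_norm_le R)).nonempty
  have hxR : R < ‖x‖ := not_le.1 fun h => hxR ⟨hx, h⟩
  have hR : 1 ≤ R := one_le_exp (by positivity)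
  have ha : max t 0 / (1 + γ) < log ‖x‖ := (lt_log_iff_exp_lt (by linarith)).2 hxR
  rw [div_lt_iff₀ hγ'] at ha
  obtain ⟨τ, hτ, hT, hxτ⟩ := exists_tauPlus_eq_forall_abs_le hd hγ.le (by linarith) hxγ
  have hlog := log_le_log (hΛ.firstMin_pos hd hτ)
    (firstMin_le (rpow_pos_of_pos (by linarith) _) hx (norm_pos_iff.1 (by linarith)) hxτ)
  rw [log_rpow (by linarith)] at hlog
  refine ⟨τ, hτ, by rw [hT]; linarith [le_max_left t 0], ?_⟩
  rw [hT, div_le_div_iff₀ (by nlinarith [le_max_right t 0]) hγ']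
  nlinarith

theorem exp_le_of_mem_box_of_rpow_lt_pibar {d : ℕ} (hd : 0 < d) {τ : Fin d → ℝ}
    (hτ : ∑ i, τ i = 0) {γ : ℝ} (hγ : 0 ≤ γ) {l : ℝ} (hl : 0 < l) {x : Fin d → ℝ} (hx0 : x ≠ 0)
    (hxl : ∀ i, |x i| ≤ l * exp (τ i)) (hxγ : ‖x‖ ^ (-γ) < Pibar d x) :
    exp (-(γ / (1 + γ) * tauPlus d τ)) ≤ l := by
  have hlt : (l * exp (tauPlus d τ)) ^ (-γ) < l :=
    (rpow_le_rpow_of_nonpos (norm_pos_iff.2 hx0) (norm_le_mul_exp_tauPlus hd hτ hl.le hxl)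
      (by linarith)).trans_lt (hxγ.trans_le (pibar_le_of_forall_abs_le hd hτ hl.le hxl))
  rw [rpow_def_of_pos (by positivity), log_mul hl.ne' (exp_pos _).ne', log_exp,
    ← lt_log_iff_exp_lt hl] at hlt
  rw [← le_log_iff_exp_le hl, div_mul_eq_mul_div, _root_.neg_le, le_div_iff₀ (by linarith)]
  linarith

/-- A nonzero `x ∈ l B_τ` either lies in the finite set `approxSet d Λ γ`, on which `Π` has a
positive lower bound since no lattice point has a zero coordinate (its multiples would make that
set infinite), or has `Π(x) > ‖x‖^{-γ}`. -/
theorem IsUnimodularLattice.le_psi1_of_approxSet_finite {d : ℕ} {Λ : Set (Fin d → ℝ)}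
    (hΛ : IsUnimodularLattice d Λ) (hd : 2 ≤ d) {γ : ℝ} (hγ : 0 < γ)
    (h : (approxSet d Λ γ).Finite) : -γ / (1 + γ) ≤ psi1 d Λ := by
  have hd0 : 0 < d := by omega
  have hcoord : ∀ x ∈ Λ, x ≠ 0 → ∀ i, x i ≠ 0 := by
    intro x hx hx0 i hxi
    refine (hΛ.infinite_setOf_pibar_eq_zero hd0 hx hx0 hxi).mono ?_ h
    rintro y ⟨hy, -, hyP⟩
    exact ⟨hy, hyP ▸ rpow_nonneg (norm_nonneg _) _⟩
  obtain ⟨m, hm, hmx⟩ := (h.sdiff (t := {0})).exists_pos_forall_le (f := Pibar d)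
    fun x hx => pibar_pos (hcoord x hx.1.1 hx.2)
  rw [neg_div]
  refine hΛ.le_psi1_of_forall_le_firstMin hd (lt_min hm one_pos) fun τ hτ =>
    hΛ.le_firstMin hd0 hτ fun l hl x hx hx0 hxl => ?_
  have hexp : exp (-(γ / (1 + γ) * tauPlus d τ)) ≤ 1 :=
    exp_le_one_iff.2 (neg_nonpos.2 (mul_nonneg (by positivity) (tauPlus_nonneg hd0 hτ)))
  by_cases hxγ : Pibar d x ≤ ‖x‖ ^ (-γ)
  · calc min m 1 * exp (-(γ / (1 + γ) * tauPlus d τ)) ≤ m * 1 :=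
          mul_le_mul (min_le_left _ _) hexp (exp_pos _).le hm.le
      _ ≤ l := by
          rw [mul_one]
          exact (hmx x ⟨⟨hx, hxγ⟩, hx0⟩).trans (pibar_le_of_forall_abs_le hd0 hτ hl.le hxl)
  · calc min m 1 * exp (-(γ / (1 + γ) * tauPlus d τ)) ≤ 1 * l :=
          mul_le_mul (min_le_right _ _)
            (exp_le_of_mem_box_of_rpow_lt_pibar hd0 hτ hγ.le hl hx0 hxl (not_le.1 hxγ))
            (exp_pos _).le zero_le_one
      _ = l := one_mul l

theorem tendsto_neg_div_one_add_atTop :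
    Tendsto (fun γ : ℝ => -γ / (1 + γ)) atTop (𝓝 (-1)) := by
  have h : Tendsto (fun γ : ℝ => (1 + γ)⁻¹ - 1) atTop (𝓝 (0 - 1)) :=
    (tendsto_inv_atTop_zero.comp (tendsto_atTop_add_const_left _ 1 tendsto_id)).sub_const 1
  rw [zero_sub] at h
  refine h.congr' ?_
  filter_upwards [eventually_gt_atTop (-1)] with γ hγ
  have : 1 + γ ≠ 0 := by linarith
  field_simp
  ring

theorem eq_neg_div_one_add_of_le_of_ge {a w : ℝ} (hw : -1 < w)
    (hlt : ∀ γ ∈ Ioo (-1) w, a ≤ -γ / (1 + γ)) (hgt : ∀ γ > w, -γ / (1 + γ) ≤ a) :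
    a = -w / (1 + w) := by
  have hf : ContinuousAt (fun γ : ℝ => -γ / (1 + γ)) w :=
    continuousAt_id.neg.div (continuousAt_const.add continuousAt_id) (by linarith)
  refine le_antisymm (ge_of_tendsto (hf.tendsto.mono_left (nhdsWithin_le_nhds (s := Iio w))) ?_)
    (le_of_tendsto (hf.tendsto.mono_left (nhdsWithin_le_nhds (s := Ioi w))) ?_)
  · filter_upwards [Ioo_mem_nhdsLT hw] using hlt
  · filter_upwards [self_mem_nhdsWithin] using hgt

/-- `ψ̲₁(Λ) = −ω(Λ)/(1 + ω(Λ))` for a unimodular lattice `Λ ⊆ ℝ^d`: if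
`ω(Λ) = +∞` then `ψ̲₁(Λ) = −1`, and if `ω(Λ)` is a real number `w` then
`ψ̲₁(Λ) = −w/(1+w)` (which is `0` for `w = 0`). -/
theorem stmt_18 (d : ℕ) (hd : 2 ≤ d) (Λ : Set (Fin d → ℝ))
    (hΛ : IsUnimodularLattice d Λ) :
    (dioExp d Λ = ⊤ → psi1 d Λ = -1) ∧
    (∀ w : ℝ, dioExp d Λ = (w : EReal) → psi1 d Λ = -w / (1 + w)) := by
  have upper (γ : ℝ) (hγ : -1 < γ) (h : (γ : EReal) < dioExp d Λ) : psi1 d Λ ≤ -γ / (1 + γ) :=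
    hΛ.psi1_le_of_approxSet_infinite (by omega) hγ (hΛ.approxSet_infinite_of_lt_dioExp h)
  have lower (γ : ℝ) (hγ : 0 < γ) (h : dioExp d Λ < γ) : -γ / (1 + γ) ≤ psi1 d Λ :=
    hΛ.le_psi1_of_approxSet_finite hd hγ
      (not_infinite.1 fun hinf => (le_dioExp_of_approxSet_infinite hinf).not_gt h)
  refine ⟨fun htop => le_antisymm ?_ (hΛ.neg_one_le_psi1 hd), fun w hw => ?_⟩
  · refine ge_of_tendsto tendsto_neg_div_one_add_atTop ?_
    filter_upwards [eventually_gt_atTop 0] with γ hγ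
    exact upper γ (by linarith) (htop ▸ EReal.coe_lt_top γ)
  have hw0 : 0 ≤ w := EReal.coe_nonneg.1 (hw ▸ hΛ.zero_le_dioExp hd)
  exact eq_neg_div_one_add_of_le_of_ge (by linarith)
    (fun γ hγ => upper γ hγ.1 (hw ▸ EReal.coe_lt_coe_iff.2 hγ.2))
    (fun γ hγ => lower γ (hw0.trans_lt hγ) (hw ▸ EReal.coe_lt_coe_iff.2 hγ))

end
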